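/- arXiv:2411.16108 — 5 statements merged into one kernel-verified Lean document; each statement's English description precedes it below -/
import Mathlib

section
/- Let M and N be additive commutative groups and let F : M → N be a function which is even (F(-x) = F(x) for all x ∈ M) and satisfies the cube relation. Then for all x, y ∈ M and every integer n, F(x + n • y) = (n² − n) • F(y) + n • F(x + y) − (n − 1) • F(x), where • on the right denotes the ℤ-scalar action on N. -/
/-!
Fix `x, y`. Specialising the cube relation to `(x, n • y, y)` shows that the forward difference
of `n ↦ F (x + n • y)` equals that of `n ↦ F (n • y)` plus the constant `F (x + y) - F x - F y`;
specialising it to `(n • y, y, -y)` and using evenness shows that the second difference of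
`n ↦ F (n • y)` is the constant `2 • F y`. A function on `ℤ` is determined by its value at `0` and
its forward differences, so both formulas follow by comparing with the claimed closed forms.
-/

theorem Int.funext_of_sub_succ_eq {N : Type*} [AddCommGroup N] {f g : ℤ → N} (h₀ : f 0 = g 0)
    (hsucc : ∀ n, f (n + 1) - f n = g (n + 1) - g n) : f = g := by
  funext n
  induction n using Int.induction_on with
  | zero => exact h₀
  | succ n ih =>
    have h := hsucc n
    rwa [ih, sub_left_inj] at h
  | pred n ih =>
    have h := hsucc (-n - 1)
    rwa [sub_add_cancel, ih, sub_right_inj] at h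

section CubeRelation

variable {M N : Type*} [AddCommGroup M] [AddCommGroup N]

def SatisfiesCubeRelation (F : M → N) : Prop :=
  ∀ x y z : M, F (x + y + z) + F x + F y + F z = F (x + y) + F (y + z) + F (x + z)

variable {F : M → N}

theorem SatisfiesCubeRelation.map_zero (hF : SatisfiesCubeRelation F) : F 0 = 0 := by
  have h := hF 0 0 0
  simp only [add_zero] at h
  linear_combination (norm := module) h

theorem SatisfiesCubeRelation.map_add_zsmul_succ_sub (hF : SatisfiesCubeRelation F)
    (x y : M) (n : ℤ) :
    F (x + (n + 1) • y) - F (x + n • y) =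
      F ((n + 1) • y) - F (n • y) + F (x + y) - F x - F y := by
  have h := hF x (n • y) y
  rw [show x + n • y + y = x + (n + 1) • y by module, show n • y + y = (n + 1) • y by module] at h
  linear_combination (norm := module) h

theorem SatisfiesCubeRelation.map_zsmul_succ_sub (hF : SatisfiesCubeRelation F)
    (heven : ∀ x, F (-x) = F x) (y : M) (n : ℤ) :
    F ((n + 1) • y) - F (n • y) = (2 * n + 1) • F y := by
  revert n
  refine congrFun (Int.funext_of_sub_succ_eq (by simp [hF.map_zero]) fun n ↦ ?_)
  have h := hF ((n + 1) • y) y (-y)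
  rw [add_neg_cancel_right, add_neg_cancel, heven, hF.map_zero,
    show (n + 1) • y + y = (n + 1 + 1) • y by module,
    show (n + 1) • y + -y = n • y by module] at h
  linear_combination (norm := module) -h

end CubeRelation

/-- If `F : M → N` between additive commutative groups is even and satisfies the
cube relation, then `F (x + n • y) = (n² − n) • F y + n • F (x + y) − (n − 1) • F x`
for all `x y : M` and `n : ℤ`. -/
theorem cube_relation_translation_formula
    {M N : Type*} [AddCommGroup M] [AddCommGroup N] (F : M → N)
    (heven : ∀ x : M, F (-x) = F x)
    (hcube : ∀ x y z : M,
      F (x + y + z) + F x + F y + F z = F (x + y) + F (y + z) + F (x + z)) :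
    ∀ (x y : M) (n : ℤ),
      F (x + n • y) = (n ^ 2 - n) • F y + n • F (x + y) - (n - 1) • F x := by
  intro x y
  have hF : SatisfiesCubeRelation F := hcube
  refine congrFun (Int.funext_of_sub_succ_eq (by simp) fun n ↦ ?_)
  rw [hF.map_add_zsmul_succ_sub, hF.map_zsmul_succ_sub heven]
  module
end

section
/- Let M and N be additive commutative groups and let F : M → N be a function which is even (F(-x) = F(x) for all x ∈ M) and satisfies the cube relation. Then F is homogeneous of degree 2 over ℤ: for every x ∈ M and every integer n, F(n • x) = n² • F(x). -/
/-! Putting `z = -y` in the cube relation and using evenness gives the parallelogram law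
`F (x + y) + F (x - y) = 2 F x + 2 F y`, a second-order linear recurrence for `n ↦ F (n • x)`
whose solution with `F 0 = 0` is `n ↦ n² F x`. -/

section CubeRelation

variable {M N : Type*} [AddCommGroup M] [AddCommGroup N] {F : M → N}

theorem map_zero_of_cube
    (hcube : ∀ x y z : M,
      F (x + y + z) + F x + F y + F z = F (x + y) + F (y + z) + F (x + z)) :
    F 0 = 0 := by
  have h := hcube 0 0 0
  simp only [add_zero] at h
  exact add_left_cancel (h.trans (add_zero _).symm)

theorem map_add_add_map_sub_of_cube (heven : ∀ x : M, F (-x) = F x)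
    (hcube : ∀ x y z : M,
      F (x + y + z) + F x + F y + F z = F (x + y) + F (y + z) + F (x + z))
    (x y : M) : F (x + y) + F (x - y) = 2 • F x + 2 • F y := by
  have h := hcube x y (-y)
  rw [add_neg_cancel_right, add_neg_cancel, map_zero_of_cube hcube, heven, ← sub_eq_add_neg,
    add_zero] at h
  rw [two_smul, two_smul, ← add_assoc]
  exact h.symm

theorem map_nsmul_of_parallelogram (h0 : F 0 = 0)
    (hpar : ∀ x y : M, F (x + y) + F (x - y) = 2 • F x + 2 • F y) (x : M) (n : ℕ) :
    F (n • x) = n ^ 2 • F x := by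
  induction n using Nat.twoStepInduction with
  | zero => simpa using h0
  | one => simp
  | more k ih_k ih_succ =>
    have h := hpar ((k + 1) • x) x
    rw [← succ_nsmul, sub_eq_of_eq_add (succ_nsmul x k), ih_k, ih_succ] at h
    rw [eq_sub_of_add_eq h]
    module

end CubeRelation

/-- If `F : M → N` between additive commutative groups is even and satisfies the
cube relation, then `F` is homogeneous of degree 2 over ℤ: `F (n • x) = n² • F x`. -/
theorem cube_relation_homogeneous_of_degree_two
    {M N : Type*} [AddCommGroup M] [AddCommGroup N] (F : M → N)
    (heven : ∀ x : M, F (-x) = F x)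
    (hcube : ∀ x y z : M,
      F (x + y + z) + F x + F y + F z = F (x + y) + F (y + z) + F (x + z)) :
    ∀ (x : M) (n : ℤ), F (n • x) = n ^ 2 • F x := by
  have hnat := map_nsmul_of_parallelogram (map_zero_of_cube hcube)
    (map_add_add_map_sub_of_cube heven hcube)
  intro x n
  obtain ⟨m, rfl | rfl⟩ := n.eq_nat_or_neg
  · rw [natCast_zsmul, hnat]
    exact_mod_cast natCast_zsmul (F x) (m ^ 2)
  · rw [neg_smul, heven, natCast_zsmul, hnat, neg_sq]
    exact_mod_cast natCast_zsmul (F x) (m ^ 2)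
end

section
/- Let V be a finite-dimensional vector space over ℚ and let W be a finite-dimensional vector space over ℝ, equipped with its canonical topology. Let Q : V → W be a quadratic map over ℚ and let Q̃ : ℝ ⊗[ℚ] V → W be the (unique) quadratic map over ℝ with Q̃(1 ⊗ v) = Q(v) for all v ∈ V. If C ⊆ W is a closed subset such that Q(v) ∈ C for every v ∈ V, then Q̃(x) ∈ C for every x ∈ ℝ ⊗[ℚ] V. -/
/-!
Equip `ℝ ⊗[ℚ] V` with its module topology. A quadratic map over a topological ring in which `2`
is invertible is `x ↦ B x x` for the associated bilinear map `B`, so on a finite module it is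
continuous. Since `ℚ` is dense in `ℝ`, the image of `v ↦ 1 ⊗ v` is dense in `ℝ ⊗[ℚ] V`: in
the basis obtained by base change of a `ℚ`-basis of `V`, it is the set of rational coordinate
vectors. So `Qt⁻¹' C` is a closed set containing a dense set.
-/

open TensorProduct

theorem QuadraticMap.continuous_of_finite {R M N : Type*} [CommRing R] [TopologicalSpace R]
    [IsTopologicalRing R] [Invertible (2 : R)]
    [AddCommGroup M] [Module R M] [TopologicalSpace M] [IsModuleTopology R M] [Module.Finite R M]
    [AddCommGroup N] [Module R N] [TopologicalSpace N] [IsModuleTopology R N]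
    (Q : QuadraticMap R M N) : Continuous Q := by
  have hQ : ⇑Q = fun x => associated Q x x :=
    funext fun x => (associated_eq_self_apply R Q x).symm
  rw [hQ]
  exact (IsModuleTopology.continuous_bilinear_of_finite_left _).comp
    (continuous_id.prodMk continuous_id)

theorem TensorProduct.denseRange_one_tmul {K A V : Type*} [Field K] [CommRing A] [Algebra K A]
    [TopologicalSpace A] [IsTopologicalRing A] [AddCommGroup V] [Module K V] [Module.Finite K V]
    [TopologicalSpace (A ⊗[K] V)] [IsModuleTopology A (A ⊗[K] V)]
    (h : DenseRange (algebraMap K A)) : DenseRange fun v : V => (1 : A) ⊗ₜ[K] v := by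
  let b := Module.finBasis K V
  let e := (b.baseChange A).equivFun.symm
  have := IsModuleTopology.toContinuousAdd A (A ⊗[K] V)
  have he : Continuous e := IsModuleTopology.continuous_of_linearMap e.toLinearMap
  have hcoords : e ∘ Pi.map (fun _ => algebraMap K A) =
      fun q => (1 : A) ⊗ₜ[K] b.equivFun.symm q := by
    funext q
    simp [e, Module.Basis.equivFun_symm_apply, tmul_sum, smul_tmul']
  have hdense := e.surjective.denseRange.comp (DenseRange.piMap fun _ => h) he
  rw [hcoords] at hdense
  exact hdense.mono (Set.range_comp_subset_range _ _)

theorem rat_quadratic_map_real_extension_mem_closed_general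
    (V : Type*) [AddCommGroup V] [Module ℚ V] [FiniteDimensional ℚ V]
    (W : Type*) [NormedAddCommGroup W] [NormedSpace ℝ W] [FiniteDimensional ℝ W]
    (Q : V → W)
    (Qt : ℝ ⊗[ℚ] V → W)
    (hQt_hom : ∀ (t : ℝ) (x : ℝ ⊗[ℚ] V), Qt (t • x) = t ^ 2 • Qt x)
    (hQt_polar : ∃ B : (ℝ ⊗[ℚ] V) →ₗ[ℝ] (ℝ ⊗[ℚ] V) →ₗ[ℝ] W,
        ∀ x y : ℝ ⊗[ℚ] V, B x y = Qt (x + y) - Qt x - Qt y)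
    (hQt_compat : ∀ v : V, Qt ((1 : ℝ) ⊗ₜ[ℚ] v) = Q v)
    (C : Set W) (hC : IsClosed C) (hQC : ∀ v : V, Q v ∈ C) :
    ∀ x : ℝ ⊗[ℚ] V, Qt x ∈ C := by
  let _ : TopologicalSpace (ℝ ⊗[ℚ] V) := moduleTopology ℝ _
  have : IsModuleTopology ℝ (ℝ ⊗[ℚ] V) := ⟨rfl⟩
  have : IsModuleTopology ℝ W := isModuleTopologyOfFiniteDimensional
  let Qt' : QuadraticMap ℝ (ℝ ⊗[ℚ] V) W :=
    { toFun := Qt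
      toFun_smul := fun t x => by rw [hQt_hom, sq]
      exists_companion' := hQt_polar.imp fun B hB x y => by rw [hB]; abel }
  have hdense : DenseRange fun v : V => (1 : ℝ) ⊗ₜ[ℚ] v :=
    denseRange_one_tmul ((funext (eq_ratCast (algebraMap ℚ ℝ))).symm ▸ Rat.denseRange_cast)
  intro x
  refine hdense.induction_on x (hC.preimage Qt'.continuous_of_finite) fun v => ?_
  show Qt _ ∈ C
  rw [hQt_compat]
  exact hQC v

/-- If a ℚ-quadratic map `Q` from a finite-dimensional ℚ-vector space `V` into a
finite-dimensional real vector space `W` takes values in a closed set `C`, then its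
unique ℝ-quadratic extension `Q̃` to `ℝ ⊗[ℚ] V` also takes values in `C`. -/
theorem rat_quadratic_map_real_extension_mem_closed
    (V : Type*) [AddCommGroup V] [Module ℚ V] [FiniteDimensional ℚ V]
    (W : Type*) [NormedAddCommGroup W] [NormedSpace ℝ W] [FiniteDimensional ℝ W]
    [Module ℚ W] [IsScalarTower ℚ ℝ W]
    (Q : V → W)
    (hhom : ∀ (c : ℚ) (v : V), Q (c • v) = c ^ 2 • Q v)
    (hpolar : ∃ B : V →ₗ[ℚ] V →ₗ[ℚ] W, ∀ v v' : V, B v v' = Q (v + v') - Q v - Q v')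
    (Qt : ℝ ⊗[ℚ] V → W)
    (hQt_hom : ∀ (t : ℝ) (x : ℝ ⊗[ℚ] V), Qt (t • x) = t ^ 2 • Qt x)
    (hQt_polar : ∃ B : (ℝ ⊗[ℚ] V) →ₗ[ℝ] (ℝ ⊗[ℚ] V) →ₗ[ℝ] W,
        ∀ x y : ℝ ⊗[ℚ] V, B x y = Qt (x + y) - Qt x - Qt y)
    (hQt_compat : ∀ v : V, Qt ((1 : ℝ) ⊗ₜ[ℚ] v) = Q v)
    (C : Set W) (hC : IsClosed C) (hQC : ∀ v : V, Q v ∈ C) :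
    ∀ x : ℝ ⊗[ℚ] V, Qt x ∈ C :=
  rat_quadratic_map_real_extension_mem_closed_general V W Q Qt hQt_hom hQt_polar hQt_compat C hC hQC
end

section
/- Let r ≥ 1, let M be a symmetric positive semidefinite r×r matrix with real entries, and let c > 0. If det M < (c / (2√r))^r, then there exists a nonzero integer vector μ ∈ ℤ^r (coerced into ℝ^r) such that q_M(μ) < (c / √r) · ‖μ‖², where ‖·‖ is the Euclidean norm on ℝ^r. -/
open Matrix

/-!
If every eigenvalue of the symmetric matrix `M` were at least `α = c / (2√r)`, then
`det M`, the product of the eigenvalues, would be at least `α ^ r`. So some unit eigenvector `v`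
has `q_M(v) < α ≤ c / √r`, i.e. the quadratic form `(c / √r) ‖x‖² - q_M(x)` is positive at `v`.
Being continuous, it is positive at a nearby rational vector, and being homogeneous of degree
two, also at an integer multiple of it.
-/

namespace Matrix

variable {n : Type*} [Fintype n]

theorem dotProduct_mulVec_smul_smul (A : Matrix n n ℝ) (t : ℝ) (x : n → ℝ) :
    (t • x) ⬝ᵥ A *ᵥ (t • x) = t ^ 2 * (x ⬝ᵥ A *ᵥ x) := by
  rw [mulVec_smul, smul_dotProduct, dotProduct_smul, smul_eq_mul, smul_eq_mul]
  ring

theorem dotProduct_smul_one_sub_mulVec [DecidableEq n] (M : Matrix n n ℝ) (a : ℝ)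
    (x : n → ℝ) : x ⬝ᵥ (a • 1 - M) *ᵥ x = a * ∑ i, x i ^ 2 - x ⬝ᵥ M *ᵥ x := by
  rw [sub_mulVec, dotProduct_sub, smul_mulVec, one_mulVec, dotProduct_smul, smul_eq_mul]
  simp only [dotProduct, sq]

theorem exists_rat_dotProduct_mulVec_pos {A : Matrix n n ℝ} {v : n → ℝ}
    (hv : 0 < v ⬝ᵥ A *ᵥ v) :
    ∃ w : n → ℚ, 0 < (fun i => (w i : ℝ)) ⬝ᵥ A *ᵥ (fun i => (w i : ℝ)) := by
  have hopen : IsOpen {x : n → ℝ | 0 < x ⬝ᵥ A *ᵥ x} :=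
    isOpen_lt continuous_const (by simp only [dotProduct, mulVec]; fun_prop)
  have hdense : Dense (Set.univ.pi fun _ : n => Set.range ((↑) : ℚ → ℝ)) :=
    dense_pi Set.univ fun _ _ => Rat.denseRange_cast
  obtain ⟨x, hxA, hxℚ⟩ := hdense.inter_open_nonempty _ hopen ⟨v, hv⟩
  choose w hw using fun i => hxℚ i (Set.mem_univ i)
  obtain rfl : (fun i => (w i : ℝ)) = x := funext hw
  exact ⟨w, hxA⟩

theorem exists_int_dotProduct_mulVec_pos_of_rat {A : Matrix n n ℝ} {w : n → ℚ}
    (hw : 0 < (fun i => (w i : ℝ)) ⬝ᵥ A *ᵥ (fun i => (w i : ℝ))) :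
    ∃ μ : n → ℤ, 0 < (fun i => (μ i : ℝ)) ⬝ᵥ A *ᵥ (fun i => (μ i : ℝ)) := by
  obtain ⟨⟨b, hb⟩, hbw⟩ :=
    IsLocalization.exist_integer_multiples_of_finite (nonZeroDivisors ℤ) w
  choose μ hμ using hbw
  have hμw : (fun i => (μ i : ℝ)) = (b : ℝ) • fun i => (w i : ℝ) := by
    ext i
    simpa using congrArg (Rat.cast : ℚ → ℝ) (hμ i)
  have hb0 : (b : ℝ) ≠ 0 := by exact_mod_cast nonZeroDivisors.ne_zero hb
  refine ⟨μ, ?_⟩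
  rw [hμw, dotProduct_mulVec_smul_smul]
  positivity

theorem exists_int_dotProduct_mulVec_pos {A : Matrix n n ℝ} {v : n → ℝ}
    (hv : 0 < v ⬝ᵥ A *ᵥ v) :
    ∃ μ : n → ℤ, μ ≠ 0 ∧ 0 < (fun i => (μ i : ℝ)) ⬝ᵥ A *ᵥ (fun i => (μ i : ℝ)) := by
  obtain ⟨w, hw⟩ := exists_rat_dotProduct_mulVec_pos hv
  obtain ⟨μ, hμ⟩ := exists_int_dotProduct_mulVec_pos_of_rat hw
  refine ⟨μ, ?_, hμ⟩
  rintro rfl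
  simp at hμ

namespace IsHermitian

variable [DecidableEq n] {M : Matrix n n ℝ} (hM : M.IsHermitian)

theorem exists_eigenvalues_lt_of_det_lt {a : ℝ} (ha : 0 ≤ a)
    (hdet : M.det < a ^ Fintype.card n) : ∃ i, hM.eigenvalues i < a := by
  by_contra! h
  have : a ^ Fintype.card n ≤ M.det := by
    rw [hM.det_eq_prod_eigenvalues, ← Finset.card_univ, ← Finset.prod_const]
    exact Finset.prod_le_prod (fun _ _ => ha) fun i _ => h i
  exact this.not_gt hdet

theorem dotProduct_smul_one_sub_mulVec_eigenvectorBasis (a : ℝ) (i : n) :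
    ⇑(hM.eigenvectorBasis i) ⬝ᵥ (a • 1 - M) *ᵥ ⇑(hM.eigenvectorBasis i) =
      a - hM.eigenvalues i := by
  have hnorm : ∑ j, hM.eigenvectorBasis i j ^ 2 = 1 := by
    have := hM.eigenvectorBasis.orthonormal.1 i
    rw [EuclideanSpace.norm_eq, Real.sqrt_eq_one] at this
    simpa only [Real.norm_eq_abs, sq_abs] using this
  have heig := hM.eigenvalues_eq i
  simp only [star_trivial, RCLike.re_to_real] at heig
  rw [dotProduct_smul_one_sub_mulVec, hnorm, mul_one, heig]

end IsHermitian

end Matrix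

theorem exists_int_vector_small_quadratic_value_of_det_small_general
    (r : ℕ) (M : Matrix (Fin r) (Fin r) ℝ) (hsymm : M.IsSymm)
    (c : ℝ) (hc : 0 < c) (hdet : M.det < (c / (2 * Real.sqrt r)) ^ r) :
    ∃ μ : Fin r → ℤ, μ ≠ 0 ∧
      (fun i => (μ i : ℝ)) ⬝ᵥ M.mulVec (fun i => (μ i : ℝ)) <
        (c / Real.sqrt r) * ∑ i, ((μ i : ℝ)) ^ 2 := by
  have hM : M.IsHermitian := isHermitian_iff_isSymm.mpr hsymm
  obtain ⟨i, hi⟩ := hM.exists_eigenvalues_lt_of_det_lt (a := c / (2 * Real.sqrt r))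
    (by positivity) (by simpa using hdet)
  have hhalf : c / (2 * Real.sqrt r) ≤ c / Real.sqrt r := by
    rw [mul_comm, ← div_div]
    exact half_le_self (by positivity)
  obtain ⟨μ, hμ0, hμ⟩ := exists_int_dotProduct_mulVec_pos
    (A := (c / Real.sqrt r) • 1 - M) (v := hM.eigenvectorBasis i) (by
      rw [hM.dotProduct_smul_one_sub_mulVec_eigenvectorBasis]
      linarith)
  rw [dotProduct_smul_one_sub_mulVec, sub_pos] at hμ
  exact ⟨μ, hμ0, hμ⟩

/-- If `M` is a symmetric positive semidefinite real `r×r` matrix with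
`det M < (c / (2√r))^r` for some `c > 0`, then there is a nonzero integer vector `μ`
with `q_M(μ) < (c / √r) ⬝ ‖μ‖²` (Euclidean norm). -/
theorem exists_int_vector_small_quadratic_value_of_det_small
    (r : ℕ) (hr : 1 ≤ r) (M : Matrix (Fin r) (Fin r) ℝ) (hsymm : M.IsSymm)
    (hpsd : ∀ x : Fin r → ℝ, 0 ≤ x ⬝ᵥ M.mulVec x)
    (c : ℝ) (hc : 0 < c) (hdet : M.det < (c / (2 * Real.sqrt r)) ^ r) :
    ∃ μ : Fin r → ℤ, μ ≠ 0 ∧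
      (fun i => (μ i : ℝ)) ⬝ᵥ M.mulVec (fun i => (μ i : ℝ)) <
        (c / Real.sqrt r) * ∑ i, ((μ i : ℝ)) ^ 2 :=
  exists_int_vector_small_quadratic_value_of_det_small_general r M hsymm c hc hdet
end

section
/- Let V be a finite-dimensional real normed vector space, let Λ ⊆ V be an additive subgroup whose ℝ-linear span is all of V, and let U ⊆ V be an open subset that is closed under multiplication by positive real scalars (c • U ⊆ U for every real c > 0). Then every x ∈ U can be written as a finite positive linear combination of elements of Λ ∩ U: there are k ≥ 1, elements v₁, …, v_k ∈ Λ ∩ U and real numbers c₁, …, c_k > 0 with x = ∑_{i=1}^k cᵢ • vᵢ. -/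
/-!
The positive combinations of points of `Λ ∩ U` form a convex cone `C`. The points `z` with
`n • z ∈ Λ` for some `n ≥ 1` are dense, and each of them lying in `U` belongs to `C` because `U`
is stable under positive scaling; hence the open set `U` lies in the closure of `C`. In finite
dimension a convex set has the same interior as its closure, so `U ⊆ interior C ⊆ C`.
-/

open Set

section Cone

variable {𝕜 M : Type*} [Semiring 𝕜] [PartialOrder 𝕜] [IsStrictOrderedRing 𝕜]
  [AddCommMonoid M] [Module 𝕜 M]

variable (𝕜) in
def ConvexCone.positiveCombinations (s : Set M) : ConvexCone 𝕜 M where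
  carrier := {x | ∃ k, 1 ≤ k ∧ ∃ (v : Fin k → M) (c : Fin k → 𝕜),
    (∀ i, v i ∈ s) ∧ (∀ i, 0 < c i) ∧ x = ∑ i, c i • v i}
  smul_mem' := by
    rintro a ha _ ⟨k, hk, v, c, hv, hc, rfl⟩
    refine ⟨k, hk, v, fun i ↦ a * c i, hv, fun i ↦ mul_pos ha (hc i), ?_⟩
    simp only [Finset.smul_sum, mul_smul]
  add_mem' := by
    rintro _ ⟨k, hk, v, c, hv, hc, rfl⟩ _ ⟨l, -, w, d, hw, hd, rfl⟩
    refine ⟨k + l, by omega, Fin.append v w, Fin.append c d,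
      (Fin.forall_fin_add _).2 ⟨by simpa, by simpa⟩,
      (Fin.forall_fin_add _).2 ⟨by simpa, by simpa⟩, ?_⟩
    rw [Fin.sum_univ_add]
    simp only [Fin.append_left, Fin.append_right]

theorem ConvexCone.subset_positiveCombinations (s : Set M) :
    s ⊆ positiveCombinations 𝕜 s :=
  fun x hx ↦ ⟨1, le_rfl, fun _ ↦ x, fun _ ↦ 1, fun _ ↦ hx, fun _ ↦ zero_lt_one, by simp⟩

end Cone

section Normed

variable {V : Type*} [NormedAddCommGroup V] [NormedSpace ℝ V]

theorem Convex.interior_closure_eq_interior [FiniteDimensional ℝ V] {s : Set V}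
    (hs : Convex ℝ s) : interior (closure s) = interior s := by
  rcases (interior (closure s)).eq_empty_or_nonempty with h | h
  · exact h.trans (subset_empty_iff.1 (h ▸ interior_mono subset_closure)).symm
  refine hs.interior_closure_eq_interior_of_nonempty_interior ?_
  rw [hs.interior_nonempty_iff_affineSpan_eq_top, eq_top_iff,
    ← isOpen_interior.affineSpan_eq_top h, affineSpan_le]
  exact interior_subset.trans <|
    closure_minimal (subset_affineSpan ℝ s) (affineSpan ℝ s).closed_of_finiteDimensional

theorem Module.Basis.dense_setOf_exists_nsmul_mem_span_int {ι : Type*} [Fintype ι]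
    (b : Basis ι ℝ V) : Dense {z : V | ∃ n : ℕ, 0 < n ∧ n • z ∈ Submodule.span ℤ (range b)} := by
  refine Metric.dense_iff.2 fun y r hr ↦ ?_
  obtain ⟨n, hn⟩ := exists_nat_gt ((∑ i, ‖b i‖) / r)
  have hn₀ : (0 : ℝ) < n := lt_of_le_of_lt (by positivity) hn
  set w : V := ↑(ZSpan.floor b ((n : ℝ) • y))
  refine ⟨(n : ℝ)⁻¹ • w, ?_, n, by exact_mod_cast hn₀, ?_⟩
  · have hyw : y - (n : ℝ)⁻¹ • w = (n : ℝ)⁻¹ • ZSpan.fract b ((n : ℝ) • y) := by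
      rw [ZSpan.fract_apply, smul_sub, inv_smul_smul₀ hn₀.ne']
    rw [Metric.mem_ball, dist_comm, dist_eq_norm, hyw, norm_smul_of_nonneg (inv_nonneg.2 hn₀.le),
      inv_mul_lt_iff₀ hn₀]
    calc ‖ZSpan.fract b ((n : ℝ) • y)‖ ≤ ∑ i, ‖b i‖ := ZSpan.norm_fract_le b _
      _ < n * r := (div_lt_iff₀ hr).1 hn
  · rw [← Nat.cast_smul_eq_nsmul ℝ, smul_inv_smul₀ hn₀.ne']
    exact (ZSpan.floor b _).2

theorem AddSubgroup.dense_setOf_exists_nsmul_mem [FiniteDimensional ℝ V] {Λ : AddSubgroup V}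
    (hspan : Submodule.span ℝ (Λ : Set V) = ⊤) : Dense {z : V | ∃ n : ℕ, 0 < n ∧ n • z ∈ Λ} := by
  let b := Module.Basis.ofSpan hspan.ge
  have : Fintype _ := FiniteDimensional.fintypeBasisIndex b
  have hspanℤ : Submodule.span ℤ (range b) ≤ Λ.toIntSubmodule :=
    Submodule.span_le.2 (Module.Basis.ofSpan_subset hspan.ge)
  refine b.dense_setOf_exists_nsmul_mem_span_int.mono ?_
  rintro z ⟨n, hn, hz⟩
  exact ⟨n, hn, hspanℤ hz⟩

end Normed

/-- In a finite-dimensional real normed vector space `V`, if `Λ` is an additive subgroup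
spanning `V` over ℝ and `U` is an open subset stable under positive scaling, then every
point of `U` is a finite positive linear combination of elements of `Λ ∩ U`. -/
theorem mem_open_cone_eq_pos_comb_of_lattice_points
    (V : Type*) [NormedAddCommGroup V] [NormedSpace ℝ V] [FiniteDimensional ℝ V]
    (Λ : AddSubgroup V) (hspan : Submodule.span ℝ (Λ : Set V) = ⊤)
    (U : Set V) (hU : IsOpen U)
    (hcone : ∀ c : ℝ, 0 < c → ∀ x ∈ U, c • x ∈ U) :
    ∀ x ∈ U, ∃ (k : ℕ), 1 ≤ k ∧ ∃ (v : Fin k → V) (c : Fin k → ℝ),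
      (∀ i, v i ∈ Λ) ∧ (∀ i, v i ∈ U) ∧ (∀ i, 0 < c i) ∧ x = ∑ i, c i • v i := by
  set C := ConvexCone.positiveCombinations ℝ ((Λ : Set V) ∩ U)
  have hUC : U ⊆ closure C := by
    refine ((AddSubgroup.dense_setOf_exists_nsmul_mem hspan).open_subset_closure_inter hU).trans
      (closure_mono ?_)
    rintro z ⟨hzU, n, hn, hzΛ⟩
    have hn' : (0 : ℝ) < n := by exact_mod_cast hn
    rw [← Nat.cast_smul_eq_nsmul ℝ] at hzΛ
    have := C.smul_mem (inv_pos.2 hn')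
      (ConvexCone.subset_positiveCombinations _ ⟨hzΛ, hcone n hn' z hzU⟩)
    rwa [inv_smul_smul₀ hn'.ne'] at this
  intro x hx
  have hxC : x ∈ C := interior_subset <|
    C.convex.interior_closure_eq_interior ▸ interior_maximal hUC hU hx
  obtain ⟨k, hk, v, c, hv, hc, rfl⟩ := hxC
  exact ⟨k, hk, v, c, fun i ↦ (hv i).1, fun i ↦ (hv i).2, hc, rfl⟩
end
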